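/- Let Φ be an irreducible root system with extended basis Δ' and Coxeter number h(Φ). Define the height h(α) of a root α relative to Δ' as the sum of coefficients in the unique nonnegative-integer decomposition of α in Δ' with coefficient sum < h(Φ). Then: (1) if α, β ∈ Φ with α+β ∈ Φ, we have h(α+β) ≡ h(α)+h(β) (mod h(Φ)); (2) for every α ∈ Φ, h(−α) = h(Φ) − h(α); (3) for every α ∈ Φ, h(α) ∈ {1, …, h(Φ)−1}. -/

import Mathlib

open Finset

/-- A based, irreducible, reduced root system in a Euclidean space, together with
coordinate data with respect to the base `Δ`, the highest root, and the
extended base `Δ' = Δ ∪ {-highest}`. -/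
structure BasedRootSystem (V : Type*) [NormedAddCommGroup V] [InnerProductSpace ℝ V] where
  Φ : Finset V
  zero_not_mem : (0 : V) ∉ Φ
  neg_mem : ∀ α ∈ Φ, -α ∈ Φ
  reduced : ∀ α ∈ Φ, ∀ c : ℝ, c • α ∈ Φ → c = 1 ∨ c = -1
  crystallographic : ∀ α ∈ Φ, ∀ β ∈ Φ, ∃ n : ℤ,
    2 * (inner ℝ α β : ℝ) / (inner ℝ α α : ℝ) = (n : ℝ)
  reflect_mem : ∀ α ∈ Φ, ∀ β ∈ Φ, β - (2 * (inner ℝ β α : ℝ) / (inner ℝ α α : ℝ)) • α ∈ Φ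
  Δ : Finset V
  base_sub : Δ ⊆ Φ
  indep : LinearIndependent ℝ (fun γ : Δ => (γ : V))
  coord : V → V → ℤ
  coord_zero : ∀ γ : V, coord 0 γ = 0
  coord_spec : ∀ α ∈ Φ, α = ∑ γ ∈ Δ, (coord α γ : ℝ) • γ
  coord_sign : ∀ α ∈ Φ, (∀ γ ∈ Δ, 0 ≤ coord α γ) ∨ (∀ γ ∈ Δ, coord α γ ≤ 0)
  highest : V
  highest_mem : highest ∈ Φ
  highest_pos : ∀ γ ∈ Δ, 1 ≤ coord highest γ
  highest_is_highest : ∀ α ∈ Φ, ∀ γ ∈ Δ, coord α γ ≤ coord highest γ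

namespace BasedRootSystem

variable {V : Type*} [NormedAddCommGroup V] [InnerProductSpace ℝ V] (B : BasedRootSystem V)

/-- `α` is positive relative to the base `Δ`. -/
def IsPos (α : V) : Prop := ∀ γ ∈ B.Δ, 0 ≤ B.coord α γ

/-- `ε_α` : `0` if `α` is positive, `1` otherwise. -/
noncomputable def eps (α : V) : ℤ := by
  classical exact if B.IsPos α then 0 else 1

/-- The extended base `Δ' = Δ ∪ {-α_M}`. -/
noncomputable def extBase : Finset V := by
  classical exact insert (-B.highest) B.Δ

/-- The Coxeter number: one plus the height of the highest root. -/
def cox : ℤ := (∑ γ ∈ B.Δ, B.coord B.highest γ) + 1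

/-- Coefficientwise order on affine roots `(α, n)`, via their decomposition in the
affine basis `Δ_aff`. -/
def affLe (p q : V × ℤ) : Prop :=
  p.2 ≤ q.2 ∧ ∀ γ ∈ B.Δ,
    B.coord p.1 γ + p.2 * B.coord B.highest γ ≤ B.coord q.1 γ + q.2 * B.coord B.highest γ

/-- The partial order on `Φ` induced from the affine root system:
`α ≤ β` iff `(α, v + ε_α) ≤ (β, v + ε_β)` coefficientwise for every `v`. -/
def rle (α β : V) : Prop := B.affLe (α, B.eps α) (β, B.eps β)

/-- `c` is a decomposition of `α` as a nonnegative integral combination of the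
extended base `Δ'`. -/
def IsDecomp (α : V) (c : V → ℕ) : Prop :=
  α = ∑ γ ∈ B.extBase, (c γ : ℝ) • γ

/-- The sum of the coefficients of a decomposition in `Δ'`. -/
noncomputable def decompSum (c : V → ℕ) : ℤ := ∑ γ ∈ B.extBase, (c γ : ℤ)

/-- A subset of `Φ` is `Δ'`-complete if it is downward closed for the order `rle`. -/
def Complete (Ψ : Set V) : Prop :=
  ∀ α ∈ Ψ, ∀ β ∈ B.Φ, B.rle β α → β ∈ Ψ

/-- The set of ratios `(Σ ε_{α_i})/t` over nonempty zero-sum families in `X`. -/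
noncomputable def ratioSet (X : Set V) : Set ℝ :=
  {q | ∃ (t : ℕ) (a : Fin t → V), 0 < t ∧ (∀ i, a i ∈ X) ∧ (∑ i, a i) = 0 ∧
        q = (∑ i, (B.eps (a i) : ℝ)) / (t : ℝ)}

end BasedRootSystem

/-! The height relative to `Δ'` differs from the ordinary height `∑ γ ∈ Δ, coord α γ` by a
multiple of `h(Φ)`: rewriting `-α_M` in the base `Δ`, each copy of `-α_M` contributes `1` to the
coefficient sum but `-(h(Φ) - 1)` to the ordinary height. The ordinary height is additive and odd
on roots, and a coefficient sum in `[1, h(Φ))` is pinned down by its residue modulo `h(Φ)`. -/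

namespace BasedRootSystem

variable {V : Type*} [NormedAddCommGroup V] [InnerProductSpace ℝ V] (B : BasedRootSystem V)

def height (α : V) : ℤ := ∑ γ ∈ B.Δ, B.coord α γ

variable {B}

lemma coord_eq_of_eq_sum {α : V} (hα : α ∈ B.Φ) {d : V → ℤ}
    (h : α = ∑ γ ∈ B.Δ, (d γ : ℝ) • γ) : ∀ γ ∈ B.Δ, B.coord α γ = d γ := by
  have hzero : ∑ γ ∈ B.Δ, ((B.coord α γ : ℝ) - d γ) • γ = 0 := by
    simp only [sub_smul, sum_sub_distrib, ← B.coord_spec α hα, ← h, sub_self]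
  intro γ hγ
  have hindep : LinearIndepOn ℝ id (B.Δ : Set V) := B.indep
  exact_mod_cast sub_eq_zero.mp (linearIndepOn_iff'.mp hindep B.Δ _ subset_rfl hzero γ hγ)

lemma coord_self_of_mem_base {γ : V} (hγ : γ ∈ B.Δ) : B.coord γ γ = 1 := by
  classical
  refine (B.coord_eq_of_eq_sum (B.base_sub hγ) (d := Pi.single γ 1) ?_ γ hγ).trans (by simp)
  simp [Pi.single_apply, hγ]

lemma coord_neg {α : V} (hα : α ∈ B.Φ) : ∀ γ ∈ B.Δ, B.coord (-α) γ = -B.coord α γ := by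
  refine B.coord_eq_of_eq_sum (B.neg_mem α hα) ?_
  conv_lhs => rw [B.coord_spec α hα]
  simp only [Int.cast_neg, neg_smul, sum_neg_distrib]

lemma coord_add {α β : V} (hα : α ∈ B.Φ) (hβ : β ∈ B.Φ) (hαβ : α + β ∈ B.Φ) :
    ∀ γ ∈ B.Δ, B.coord (α + β) γ = B.coord α γ + B.coord β γ := by
  refine B.coord_eq_of_eq_sum hαβ ?_
  conv_lhs => rw [B.coord_spec α hα, B.coord_spec β hβ]
  simp only [Int.cast_add, add_smul, sum_add_distrib]

lemma height_neg {α : V} (hα : α ∈ B.Φ) : B.height (-α) = -B.height α := by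
  rw [height, height, ← sum_neg_distrib]
  exact sum_congr rfl (coord_neg hα)

lemma height_add {α β : V} (hα : α ∈ B.Φ) (hβ : β ∈ B.Φ) (hαβ : α + β ∈ B.Φ) :
    B.height (α + β) = B.height α + B.height β := by
  rw [height, height, height, ← sum_add_distrib]
  exact sum_congr rfl (coord_add hα hβ hαβ)

lemma neg_highest_notMem_base : -B.highest ∉ B.Δ := fun hmem => by
  have hneg := coord_neg B.highest_mem _ hmem
  rw [coord_self_of_mem_base hmem] at hneg
  have := B.highest_pos _ hmem
  omega

lemma decompSum_eq_height_add {α : V} (hα : α ∈ B.Φ) {c : V → ℕ} (hc : B.IsDecomp α c) :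
    B.decompSum c = B.height α + c (-B.highest) * B.cox := by
  classical
  have hext : B.extBase = insert (-B.highest) B.Δ := by rw [extBase]
  set k : ℤ := (c (-B.highest) : ℤ)
  have hneg : (k : ℝ) • -B.highest = -∑ γ ∈ B.Δ, ((k * B.coord B.highest γ : ℤ) : ℝ) • γ := by
    conv_lhs => rw [B.coord_spec B.highest B.highest_mem]
    simp only [smul_neg, smul_sum, smul_smul, Int.cast_mul]
  have hcoord : ∀ γ ∈ B.Δ, B.coord α γ = c γ - k * B.coord B.highest γ := by
    refine B.coord_eq_of_eq_sum hα ?_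
    rw [hc, hext, sum_insert neg_highest_notMem_base, show ((c (-B.highest) : ℕ) : ℝ) = (k : ℝ) by simp [k], hneg,
      neg_add_eq_sub, ← sum_sub_distrib]
    exact sum_congr rfl fun γ _ => by rw [← sub_smul]; push_cast; rfl
  rw [decompSum, hext, sum_insert neg_highest_notMem_base, cox, height,
    sum_congr rfl hcoord, sum_sub_distrib, ← mul_sum]
  ring

lemma decompSum_modEq_height {α : V} (hα : α ∈ B.Φ) {c : V → ℕ} (hc : B.IsDecomp α c) :
    B.decompSum c ≡ B.height α [ZMOD B.cox] := by
  rw [decompSum_eq_height_add hα hc]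
  exact Int.add_mul_modulus_modEq_iff.mpr rfl

lemma decompSum_pos {α : V} (hα : α ∈ B.Φ) {c : V → ℕ} (hc : B.IsDecomp α c) :
    0 < B.decompSum c := by
  rw [decompSum, ← Nat.cast_sum, Nat.cast_pos, Nat.pos_iff_ne_zero]
  intro hzero
  rw [sum_eq_zero_iff] at hzero
  have : α = 0 := by
    rw [hc]
    exact sum_eq_zero fun γ hγ => by simp [hzero γ hγ]
  exact B.zero_not_mem (this ▸ hα)

end BasedRootSystem

open BasedRootSystem in
theorem stmt1_general {V : Type*} [NormedAddCommGroup V] [InnerProductSpace ℝ V]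
    (B : BasedRootSystem V) (α β : V) (hα : α ∈ B.Φ) (hβ : β ∈ B.Φ)
    (cα cβ cnα : V → ℕ)
    (hcα : B.IsDecomp α cα) (hcα' : B.decompSum cα < B.cox)
    (hcβ : B.IsDecomp β cβ)
    (hcnα : B.IsDecomp (-α) cnα) (hcnα' : B.decompSum cnα < B.cox) :
    (α + β ∈ B.Φ → ∀ cs : V → ℕ, B.IsDecomp (α + β) cs → B.decompSum cs < B.cox →
        B.decompSum cs ≡ B.decompSum cα + B.decompSum cβ [ZMOD B.cox]) ∧
    B.decompSum cnα = B.cox - B.decompSum cα ∧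
    (1 ≤ B.decompSum cα ∧ B.decompSum cα ≤ B.cox - 1) := by
  have hmα := decompSum_modEq_height hα hcα
  have hposα := decompSum_pos hα hcα
  refine ⟨fun hαβ cs hcs _ => ?_, ?_, hposα, by omega⟩
  · calc B.decompSum cs ≡ B.height (α + β) [ZMOD B.cox] := decompSum_modEq_height hαβ hcs
      _ = B.height α + B.height β := height_add hα hβ hαβ
      _ ≡ B.decompSum cα + B.decompSum cβ [ZMOD B.cox] :=
          (hmα.add (decompSum_modEq_height hβ hcβ)).symm
  · have hposnα := decompSum_pos (B.neg_mem α hα) hcnα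
    have hcong : B.decompSum cnα ≡ B.cox - B.decompSum cα [ZMOD B.cox] :=
      calc B.decompSum cnα ≡ B.height (-α) [ZMOD B.cox] :=
            decompSum_modEq_height (B.neg_mem α hα) hcnα
        _ = -B.height α := height_neg hα
        _ ≡ -B.decompSum cα [ZMOD B.cox] := hmα.symm.neg
        _ ≡ B.cox - B.decompSum cα [ZMOD B.cox] := Int.modEq_iff_dvd.mpr ⟨1, by ring⟩
    have hmod := hcong.eq
    rwa [Int.emod_eq_of_lt, Int.emod_eq_of_lt] at hmod <;> omega

/-- properties of the height relative to `Δ'` (given here through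
the coefficient sums of the unique decompositions with coefficient sum `< h(Φ)`):
additivity modulo `h(Φ)`, the relation `h(-α) = h(Φ) - h(α)`, and the bounds
`1 ≤ h(α) ≤ h(Φ) - 1`. -/
theorem stmt1 {V : Type*} [NormedAddCommGroup V] [InnerProductSpace ℝ V]
    (B : BasedRootSystem V) (α β : V) (hα : α ∈ B.Φ) (hβ : β ∈ B.Φ)
    (cα cβ cnα : V → ℕ)
    (hcα : B.IsDecomp α cα) (hcα' : B.decompSum cα < B.cox)
    (hcβ : B.IsDecomp β cβ) (hcβ' : B.decompSum cβ < B.cox)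
    (hcnα : B.IsDecomp (-α) cnα) (hcnα' : B.decompSum cnα < B.cox) :
    (α + β ∈ B.Φ → ∀ cs : V → ℕ, B.IsDecomp (α + β) cs → B.decompSum cs < B.cox →
        B.decompSum cs ≡ B.decompSum cα + B.decompSum cβ [ZMOD B.cox]) ∧
    B.decompSum cnα = B.cox - B.decompSum cα ∧
    (1 ≤ B.decompSum cα ∧ B.decompSum cα ≤ B.cox - 1) :=
  stmt1_general B α β hα hβ cα cβ cnα hcα hcα' hcβ hcnα hcnα'
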